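/- Divergence identity for the scalar curvature of a graph: with R given by the coordinate formula R = (1/(1+|∇f|²)) [ f_{ii} f_{jj} − f_{ij} f_{ij} − (2 f_j f_k/(1+|∇f|²)) ( f_{ii} f_{jk} − f_{ij} f_{ik} ) ], one has R = Σ_j ∂_j [ (1/(1+|∇f|²)) ( f_{ii} f_j − f_{ij} f_i ) ], i.e. R is the Euclidean divergence of the vector field X_j = (Δf · f_j − f_{ij} f_i)/(1+|∇f|²). -/

import Mathlib

/-!
Write `X_j = A_j / W` with `W = 1 + |∇f|²` and `A_j = Δf f_j - f_{ij} f_i`, so that by the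
quotient rule `∂_j X_j = ∂_j A_j / W - A_j ∂_j W / W²`. In `∂_j A_j` the third-order terms
`f_{iij} f_j` and `f_{ijj} f_i` cancel by symmetry of third derivatives, leaving
`(Δf)² - f_{ij} f_{ij}`; and since `∂_j W = 2 f_i f_{ij}`, symmetry of the Hessian turns
`A_j ∂_j W` into `2 f_j f_k (Δf f_{jk} - f_{ij} f_{ik})`.
-/

open MeasureTheory Filter
open scoped Topology

noncomputable section

/-- The `i`-th partial derivative of `f` on `ℝⁿ`. -/
def pd {n : ℕ} (f : EuclideanSpace ℝ (Fin n) → ℝ) (i : Fin n)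
    (x : EuclideanSpace ℝ (Fin n)) : ℝ :=
  fderiv ℝ f x (EuclideanSpace.single i 1)

/-- Second partial derivatives `f_{ij}`. -/
def pd2 {n : ℕ} (f : EuclideanSpace ℝ (Fin n) → ℝ) (i j : Fin n)
    (x : EuclideanSpace ℝ (Fin n)) : ℝ :=
  pd (pd f i) j x

/-- `|∇f|²`, the squared Euclidean norm of the gradient of `f`. -/
def gradSq {n : ℕ} (f : EuclideanSpace ℝ (Fin n) → ℝ)
    (x : EuclideanSpace ℝ (Fin n)) : ℝ :=
  ∑ i, (pd f i x) ^ 2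

/-- The scalar curvature of the graph of `f`, in the coordinate form
`R = (1/(1+|∇f|²)) [ f_{ii}f_{jj} - f_{ij}f_{ij} - (2 f_j f_k/(1+|∇f|²))(f_{ii}f_{jk} - f_{ij}f_{ik}) ]`. -/
def Rsc {n : ℕ} (f : EuclideanSpace ℝ (Fin n) → ℝ)
    (x : EuclideanSpace ℝ (Fin n)) : ℝ :=
  (1 + gradSq f x)⁻¹ *
    ((∑ i, pd2 f i i x) ^ 2 - (∑ i, ∑ j, (pd2 f i j x) ^ 2)
      - 2 / (1 + gradSq f x) *
        ∑ j, ∑ k, pd f j x * pd f k x *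
          ((∑ i, pd2 f i i x) * pd2 f j k x - ∑ i, pd2 f i j x * pd2 f i k x))

open Finset

section

variable {n : ℕ}

section Calculus

variable {g h : EuclideanSpace ℝ (Fin n) → ℝ} {x : EuclideanSpace ℝ (Fin n)} {i : Fin n}

lemma pd_sub (hg : DifferentiableAt ℝ g x) (hh : DifferentiableAt ℝ h x) :
    pd (fun y => g y - h y) i x = pd g i x - pd h i x := by
  simp [pd, fderiv_fun_sub hg hh]

lemma pd_mul (hg : DifferentiableAt ℝ g x) (hh : DifferentiableAt ℝ h x) :
    pd (fun y => g y * h y) i x = pd g i x * h x + g x * pd h i x := by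
  simp [pd, fderiv_fun_mul hg hh]
  ring

lemma pd_inv (hh : DifferentiableAt ℝ h x) (hx : h x ≠ 0) :
    pd (fun y => (h y)⁻¹) i x = -pd h i x / h x ^ 2 := by
  have H : HasFDerivAt (fun y => (h y)⁻¹) ((-(h x ^ 2)⁻¹) • fderiv ℝ h x) x :=
    (hasDerivAt_inv hx).comp_hasFDerivAt x hh.hasFDerivAt
  simp [pd, H.fderiv, div_eq_mul_inv, mul_comm]

lemma pd_div (hg : DifferentiableAt ℝ g x) (hh : DifferentiableAt ℝ h x) (hx : h x ≠ 0) :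
    pd (fun y => g y / h y) i x = pd g i x / h x - g x * pd h i x / h x ^ 2 := by
  simp only [div_eq_mul_inv]
  rw [pd_mul (h := fun y => (h y)⁻¹) hg (hh.inv hx), pd_inv hh hx]
  ring

lemma pd_const_add (c : ℝ) : pd (fun y => c + g y) i x = pd g i x := by
  simp [pd]

lemma pd_sum {ι : Type*} (s : Finset ι) {F : ι → EuclideanSpace ℝ (Fin n) → ℝ}
    (hF : ∀ j ∈ s, DifferentiableAt ℝ (F j) x) :
    pd (fun y => ∑ j ∈ s, F j y) i x = ∑ j ∈ s, pd (F j) i x := by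
  simp [pd, fderiv_fun_sum hF]

lemma pd_sq (hg : DifferentiableAt ℝ g x) :
    pd (fun y => g y ^ 2) i x = 2 * g x * pd g i x := by
  simp only [sq, pd_mul hg hg]
  ring

lemma contDiff_pd {k m : WithTop ℕ∞} (hg : ContDiff ℝ k g) (hmk : m + 1 ≤ k) (i : Fin n) :
    ContDiff ℝ m (pd g i) := by
  unfold pd
  exact (ContinuousLinearMap.apply ℝ ℝ (EuclideanSpace.single i 1)).contDiff.comp
    (hg.fderiv_right hmk)

lemma pd2_comm (hg : ContDiff ℝ 2 g) (i j : Fin n) (y : EuclideanSpace ℝ (Fin n)) :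
    pd2 g i j y = pd2 g j i y := by
  have hsnd : ∀ a b, pd2 g a b y =
      fderiv ℝ (fderiv ℝ g) y (EuclideanSpace.single b 1) (EuclideanSpace.single a 1) := by
    intro a b
    have hdf : DifferentiableAt ℝ (fderiv ℝ g) y :=
      (hg.fderiv_right (m := 1) le_rfl).differentiable one_ne_zero y
    unfold pd2 pd
    rw [fderiv_clm_apply hdf (differentiableAt_const _)]
    simp
  rw [hsnd, hsnd]
  exact (hg.contDiffAt.isSymmSndFDerivAt (by norm_num)).eq _ _

lemma pd_pd2_comm (hg : ContDiff ℝ 3 g) (i j : Fin n) :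
    pd (pd2 g i i) j x = pd (pd2 g j i) i x := by
  have hswap : pd2 g i j = pd2 g j i :=
    funext (pd2_comm (hg.of_le (by norm_num)) i j)
  calc pd (pd2 g i i) j x = pd2 (pd g i) i j x := rfl
    _ = pd2 (pd g i) j i x := pd2_comm (contDiff_pd hg (by norm_num) i) i j x
    _ = pd (pd2 g j i) i x := by rw [← hswap]; rfl

lemma pd_gradSq (hg : ∀ i, DifferentiableAt ℝ (pd g i) x) (j : Fin n) :
    pd (gradSq g) j x = ∑ i, 2 * pd g i x * pd2 g i j x := by
  unfold gradSq
  rw [pd_sum (F := fun i y => pd g i y ^ 2) _ fun i _ => (hg i).pow 2]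
  exact sum_congr rfl fun i _ => pd_sq (hg i)

end Calculus

/-- In matrix form: `⟪(tr H - H) u, 2 H u⟫ = 2 uᵀ (tr H • H - H²) u` for symmetric `H`. -/
lemma sum_trace_smul_sub_mulVec_mul_mulVec {ι : Type*} [Fintype ι] (u : ι → ℝ)
    (H : ι → ι → ℝ) (hH : ∀ i j, H i j = H j i) :
    ∑ j, ((∑ i, H i i) * u j - ∑ i, H i j * u i) * ∑ i, 2 * u i * H i j
      = 2 * ∑ j, ∑ k, u j * u k * ((∑ i, H i i) * H j k - ∑ i, H i j * H i k) := by
  simp only [sub_mul, mul_sub, mul_sum, sum_mul, sum_sub_distrib]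
  congr 1
  · refine sum_congr rfl fun j _ => sum_congr rfl fun k _ => ?_
    rw [hH k j]
    exact sum_congr rfl fun i _ => by ring
  · rw [sum_comm]
    refine sum_congr rfl fun j _ => ?_
    rw [sum_comm]
    refine sum_congr rfl fun k _ => sum_congr rfl fun i _ => ?_
    rw [hH j i, hH k i]; ring

/-- The numerator `A_j` of the vector field `X_j = A_j / (1 + |∇f|²)`. -/
def curvatureFlux (f : EuclideanSpace ℝ (Fin n) → ℝ) (j : Fin n)
    (y : EuclideanSpace ℝ (Fin n)) : ℝ :=
  (∑ i, pd2 f i i y) * pd f j y - ∑ i, pd2 f i j y * pd f i y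

section Flux

variable {f : EuclideanSpace ℝ (Fin n) → ℝ} (x : EuclideanSpace ℝ (Fin n))

lemma differentiableAt_pd (hf : ContDiff ℝ 2 f) (i : Fin n) : DifferentiableAt ℝ (pd f i) x :=
  (contDiff_pd hf (m := 1) (by norm_num) i).differentiable one_ne_zero x

lemma differentiableAt_pd2 (hf : ContDiff ℝ 3 f) (i j : Fin n) :
    DifferentiableAt ℝ (pd2 f i j) x :=
  differentiableAt_pd x (contDiff_pd hf (by norm_num) i) j

lemma differentiableAt_gradSq (hf : ContDiff ℝ 2 f) : DifferentiableAt ℝ (gradSq f) x :=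
  DifferentiableAt.fun_sum fun i _ => (differentiableAt_pd x hf i).pow 2

lemma differentiableAt_laplacian (hf : ContDiff ℝ 3 f) :
    DifferentiableAt ℝ (fun y => ∑ i, pd2 f i i y) x :=
  DifferentiableAt.fun_sum fun i _ => differentiableAt_pd2 x hf i i

lemma differentiableAt_curvatureFlux (hf : ContDiff ℝ 3 f) (j : Fin n) :
    DifferentiableAt ℝ (curvatureFlux f j) x :=
  have hu := differentiableAt_pd x (hf.of_le (by norm_num))
  ((differentiableAt_laplacian x hf).fun_mul (hu j)).sub
    (DifferentiableAt.fun_sum fun i _ => (differentiableAt_pd2 x hf i j).fun_mul (hu i))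

lemma pd_curvatureFlux (hf : ContDiff ℝ 3 f) (j : Fin n) :
    pd (curvatureFlux f j) j x
      = (∑ i, pd (pd2 f i i) j x) * pd f j x + (∑ i, pd2 f i i x) * pd2 f j j x
        - ∑ i, (pd (pd2 f i j) j x * pd f i x + pd2 f i j x * pd2 f i j x) := by
  have hu := differentiableAt_pd x (hf.of_le (by norm_num))
  have hH := differentiableAt_pd2 x hf
  have hΔ := differentiableAt_laplacian x hf
  unfold curvatureFlux
  rw [pd_sub (hΔ.fun_mul (hu j)) (DifferentiableAt.fun_sum fun i _ => (hH i j).fun_mul (hu i)),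
    pd_mul hΔ (hu j), pd_sum _ fun i _ => hH i i,
    pd_sum (F := fun i y => pd2 f i j y * pd f i y) _ fun i _ => (hH i j).fun_mul (hu i)]
  simp only [pd_mul (hH _ j) (hu _)]
  rfl

lemma sum_pd_curvatureFlux (hf : ContDiff ℝ 3 f) :
    ∑ j, pd (curvatureFlux f j) j x
      = (∑ i, pd2 f i i x) ^ 2 - ∑ i, ∑ j, pd2 f i j x ^ 2 := by
  have third_order : ∑ j, (∑ i, pd (pd2 f i i) j x) * pd f j x
      = ∑ j, ∑ i, pd (pd2 f i j) j x * pd f i x := by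
    calc _ = ∑ j, ∑ i, pd (pd2 f j i) i x * pd f j x := by
          simp only [sum_mul, pd_pd2_comm hf]
      _ = _ := sum_comm
  simp only [pd_curvatureFlux x hf, sum_sub_distrib, sum_add_distrib, third_order, ← mul_sum]
  rw [sum_comm (f := fun j i => pd2 f i j x * pd2 f i j x)]
  simp only [sq]
  ring

lemma sum_curvatureFlux_mul_pd_gradSq (hf : ContDiff ℝ 2 f) :
    ∑ j, curvatureFlux f j x * pd (gradSq f) j x
      = 2 * ∑ j, ∑ k, pd f j x * pd f k x *
          ((∑ i, pd2 f i i x) * pd2 f j k x - ∑ i, pd2 f i j x * pd2 f i k x) := by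
  simp only [curvatureFlux, pd_gradSq (differentiableAt_pd x hf)]
  exact sum_trace_smul_sub_mulVec_mul_mulVec _ _ fun i j => pd2_comm hf i j x

end Flux

end

/-- the scalar curvature of the graph of `f` is the Euclidean divergence of
the vector field `X_j = (f_{ii} f_j - f_{ij} f_i)/(1 + |∇f|²)`. -/
theorem scalar_curvature_eq_divergence {n : ℕ} (f : EuclideanSpace ℝ (Fin n) → ℝ)
    (hf : ContDiff ℝ 3 f) (x : EuclideanSpace ℝ (Fin n)) :
    Rsc f x =
      ∑ j, pd (fun y =>
        ((∑ i, pd2 f i i y) * pd f j y - ∑ i, pd2 f i j y * pd f i y) / (1 + gradSq f y)) j x := by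
  have hf2 : ContDiff ℝ 2 f := hf.of_le (by norm_num)
  have hW : 1 + gradSq f x ≠ 0 := by
    have : 0 ≤ gradSq f x := sum_nonneg fun i _ => sq_nonneg _
    positivity
  have quotient_rule : ∀ j, pd (fun y => curvatureFlux f j y / (1 + gradSq f y)) j x
      = pd (curvatureFlux f j) j x / (1 + gradSq f x)
        - curvatureFlux f j x * pd (gradSq f) j x / (1 + gradSq f x) ^ 2 := fun j => by
    rw [pd_div (differentiableAt_curvatureFlux x hf j)
      ((differentiableAt_gradSq x hf2).const_add 1) hW, pd_const_add]
  change Rsc f x = ∑ j, pd (fun y => curvatureFlux f j y / (1 + gradSq f y)) j x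
  rw [sum_congr rfl fun j _ => quotient_rule j, sum_sub_distrib, ← sum_div, ← sum_div,
    sum_pd_curvatureFlux x hf, sum_curvatureFlux_mul_pd_gradSq x hf2, Rsc]
  field_simp
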